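/- For every integer n ≥ 3, the sequence n−1, n−1, n−2, ..., ⌈n/2⌉, ⌈n/2⌉, ..., 3, 2 (of length n, containing n−2 distinct values, with n−1 and ⌈n/2⌉ each appearing twice) is the degree sequence of a threshold graph G_n, and G_n is hamiltonian. -/

import Mathlib

open SimpleGraph Finset

/-- A threshold graph: there exist a nonnegative vertex weight function and a
nonnegative threshold `t` such that distinct vertices are adjacent iff the sum
of their weights exceeds `t`. -/
def SimpleGraph.IsThreshold {V : Type} (G : SimpleGraph V) : Prop :=
  ∃ (f : V → ℝ) (t : ℝ), (∀ v, 0 ≤ f v) ∧ 0 ≤ t ∧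
    ∀ u v : V, u ≠ v → (G.Adj u v ↔ f u + f v > t)

/-- Degree of a vertex (no decidability assumptions). -/
noncomputable def SimpleGraph.deg {V : Type} [Fintype V] (G : SimpleGraph V) (v : V) : ℕ :=
  Nat.card {u // G.Adj v u}

/-- `δ 0 = 0 < δ 1 < ⋯ < δ m` are exactly the degrees occurring in `G`;
the degree partition of `G` is `D_i = {v : deg v = δ i}`, `i = 0, …, m`. -/
structure SimpleGraph.DegreePartition {V : Type} [Fintype V] (G : SimpleGraph V)
    (m : ℕ) (δ : ℕ → ℕ) : Prop where
  zero : δ 0 = 0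
  mono : ∀ i j, i < j → j ≤ m → δ i < δ j
  cover : ∀ v : V, ∃ i ≤ m, G.deg v = δ i
  attained : ∀ i, 1 ≤ i → i ≤ m → ∃ v : V, G.deg v = δ i

/-- The degree set `D_i` of the degree partition. -/
noncomputable def SimpleGraph.Dset {V : Type} [Fintype V] (G : SimpleGraph V)
    (δ : ℕ → ℕ) (i : ℕ) : Finset V :=
  Finset.univ.filter (fun v => G.deg v = δ i)

/-- A key edge of a threshold graph with degree partition `D_0, …, D_m`: an edge
joining `D_k` and `D_{m+1-k}` for some `1 ≤ k ≤ ⌈m/2⌉`. -/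
def SimpleGraph.IsKeyEdge {V : Type} [Fintype V] (G : SimpleGraph V)
    (m : ℕ) (δ : ℕ → ℕ) (e : Sym2 V) : Prop :=
  e ∈ G.edgeSet ∧ ∃ x y k, e = s(x, y) ∧ 1 ≤ k ∧ k ≤ (m + 1) / 2 ∧
    G.deg x = δ k ∧ G.deg y = δ (m + 1 - k)

/-- The number of Hamilton cycles of `G`, counted as unordered spanning cycles
(a cycle is identified with its edge set). -/
noncomputable def SimpleGraph.hamCycleCount {V : Type} [Fintype V] [DecidableEq V]
    (G : SimpleGraph V) : ℕ :=
  Nat.card {s : Finset (Sym2 V) // ∃ (v : V) (w : G.Walk v v),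
    w.IsHamiltonianCycle ∧ w.edges.toFinset = s}

/-- The multiset of degrees of `G`. -/
noncomputable def SimpleGraph.degMultiset {V : Type} [Fintype V] (G : SimpleGraph V) :
    Multiset ℕ :=
  Finset.univ.val.map G.deg

/-- The degree sequence `n-1, n-1, n-2, …, ⌈n/2⌉, ⌈n/2⌉, …, 3, 2` of the graph `Gₙ`,
as a multiset: the values `2, …, n-1` together with an extra copy of `⌈n/2⌉` and of `n-1`. -/
def gnDegSeq (n : ℕ) : Multiset ℕ :=
  (Multiset.range (n - 2)).map (· + 2) + {(n + 1) / 2, n - 1}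

/-- An independent set in a graph. -/
def SimpleGraph.IsIndepSet' {V : Type} (G : SimpleGraph V) (S : Set V) : Prop :=
  ∀ u ∈ S, ∀ v ∈ S, u ≠ v → ¬ G.Adj u v

/-!
Give vertex `i ∈ {0, …, n - 1}` weight `i` and take threshold `n - 3`, so that `u ~ v` iff
`u + v ≥ n - 2`. Then `v` has degree `v + 2` while `2v + 2 < n`, degree `v + 1` from there up to
`v = n - 3`, and degree `n - 1` for the top two vertices: these are the values `2, …, n - 1` with
`⌈n/2⌉` and `n - 1` repeated. Listing the vertices as `n - 1, 0, n - 2, 1, n - 3, 2, …` gives a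
Hamilton cycle, since consecutive entries sum to `n - 2` or `n - 1`.
-/

theorem List.map_range'_eq_range'_add {f : ℕ → ℕ} {s l c : ℕ}
    (h : ∀ x, s ≤ x → x < s + l → f x = x + c) :
    (List.range' s l).map f = List.range' (s + c) l := by
  rw [add_comm s c, ← List.map_add_range']
  refine List.map_congr_left fun x hx => ?_
  rw [List.mem_range'_1] at hx
  rw [h x hx.1 hx.2, add_comm]

namespace SimpleGraph

variable {V W : Type}

theorem deg_eq_degree [Fintype V] (G : SimpleGraph V) [DecidableRel G.Adj] (v : V) :
    G.deg v = G.degree v := by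
  rw [← card_neighborSet_eq_degree, ← Nat.card_eq_fintype_card]
  rfl

theorem degMultiset_eq_map_range {n : ℕ} (G : SimpleGraph (Fin n)) {d : ℕ → ℕ}
    (h : ∀ v : Fin n, G.deg v = d v) : G.degMultiset = ((List.range n).map d : Multiset ℕ) := by
  rw [degMultiset, Fin.univ_val_map, List.ofFn_eq_map, ← List.map_coe_finRange_eq_range,
    List.map_map]
  exact congrArg _ (List.map_congr_left fun v _ => h v)

def thresholdGraph (f : V → ℕ) (t : ℕ) : SimpleGraph V where
  Adj u v := u ≠ v ∧ t < f u + f v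
  symm := ⟨fun _ _ h => ⟨h.1.symm, add_comm (f _) (f _) ▸ h.2⟩⟩
  loopless := ⟨fun _ h => h.1 rfl⟩

theorem isThreshold_thresholdGraph (f : V → ℕ) (t : ℕ) : (thresholdGraph f t).IsThreshold :=
  ⟨fun v => f v, t, fun _ => Nat.cast_nonneg _, Nat.cast_nonneg _, fun u v huv => by
    simp only [thresholdGraph, ne_eq, huv, not_false_eq_true, true_and, gt_iff_lt]
    exact_mod_cast Iff.rfl⟩

theorem isHamiltonian_cycleGraph (m : ℕ) : (cycleGraph (m + 3)).IsHamiltonian := fun _ =>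
  ⟨0, cycleGraph.cycle m, Walk.isHamiltonianCycle_iff_isCycle_and_length_eq.2
    ⟨cycleGraph.isCycle_cycle, by simp [cycleGraph.length_cycle]⟩⟩

theorem IsHamiltonian.of_hom_bijective [Fintype V] [Fintype W] [DecidableEq V] [DecidableEq W]
    {G : SimpleGraph V} {H : SimpleGraph W} (hG : G.IsHamiltonian) (f : G →g H)
    (hf : Function.Bijective f) : H.IsHamiltonian := fun hW =>
  let ⟨_, p, hp⟩ := hG (Fintype.card_of_bijective hf ▸ hW)
  ⟨_, p.map f, hp.map hf⟩

theorem isHamiltonian_of_bijective_of_adj_add_one [Fintype V] [DecidableEq V]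
    {G : SimpleGraph V} {m : ℕ} (σ : Fin (m + 3) → V) (hσ : Function.Bijective σ)
    (hadj : ∀ i, G.Adj (σ i) (σ (i + 1))) : G.IsHamiltonian := by
  refine (isHamiltonian_cycleGraph m).of_hom_bijective ⟨σ, fun {u v} huv => ?_⟩ hσ
  rcases cycleGraph_adj.1 huv with h | h <;> rw [sub_eq_iff_eq_add'] at h <;> subst h
  · exact (hadj v).symm
  · exact hadj u

end SimpleGraph

def gnGraph (n : ℕ) : SimpleGraph (Fin n) := thresholdGraph Fin.val (n - 3)

theorem gnGraph_adj {n : ℕ} {u v : Fin n} : (gnGraph n).Adj u v ↔ u ≠ v ∧ n - 3 < u + v :=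
  Iff.rfl

-- `min (v + 2) n` counts the `u < n` with `n - 2 ≤ u + v`, and `v` may be one of them.
def gnDeg (n v : ℕ) : ℕ := min (v + 2) n - if n ≤ 2 * v + 2 then 1 else 0

theorem gnGraph_deg {n : ℕ} (hn : 3 ≤ n) (v : Fin n) : (gnGraph n).deg v = gnDeg n v := by
  classical
  have hN : (gnGraph n).neighborFinset v = (Ici ⟨n - 2 - v, by omega⟩).erase v := by
    ext u
    simp only [mem_neighborFinset, gnGraph_adj, mem_erase, mem_Ici, Fin.le_def, ne_eq,
      Fin.ext_iff]
    omega
  rw [deg_eq_degree, ← card_neighborFinset_eq_degree, hN, card_erase_eq_ite, Fin.card_Ici,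
    gnDeg]
  simp only [mem_Ici, Fin.le_def]
  split_ifs <;> omega

theorem map_gnDeg_range {k m : ℕ} (hmk : m ≤ k) (hkm : k ≤ m + 1) :
    (List.range (k + m + 2)).map (gnDeg (k + m + 2)) =
      List.range' 2 k ++ List.range' (k + 1) m ++ [k + m + 1, k + m + 1] := by
  rw [List.range_eq_range', ← List.range'_append_1 (m := k + m) (n := 2),
    ← List.range'_append_1 (m := k) (n := m), List.map_append, List.map_append,
    List.map_range'_eq_range'_add (c := 2) fun x _ hx => ?low,
    List.map_range'_eq_range'_add (c := 1) fun x hx hx' => ?mid]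
  case low | mid => simp only [gnDeg]; split_ifs <;> omega
  simp only [zero_add, List.range'_succ, List.range'_zero, List.map_cons, List.map_nil,
    List.append_cancel_left_eq, List.cons.injEq, and_true, gnDeg]
  split_ifs <;> omega

theorem gnDegSeq_eq {k m : ℕ} (hmk : m ≤ k) (hkm : k ≤ m + 1) :
    gnDegSeq (k + m + 2) =
      ↑(List.range' 2 k ++ List.range' (k + 2) m) + {k + 1, k + m + 1} := by
  rw [gnDegSeq, show k + m + 2 - 2 = k + m by omega, show (k + m + 2 + 1) / 2 = k + 1 by omega,
    show k + m + 2 - 1 = k + m + 1 by omega, ← Multiset.coe_range, Multiset.map_coe,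
    List.range_eq_range', List.map_range'_eq_range'_add fun _ _ _ => rfl, zero_add,
    ← List.range'_append_1, add_comm 2 k]

theorem gnGraph_degMultiset {n : ℕ} (hn : 3 ≤ n) : (gnGraph n).degMultiset = gnDegSeq n := by
  obtain ⟨k, m, hmk, hkm, rfl⟩ : ∃ k m, m ≤ k ∧ k ≤ m + 1 ∧ n = k + m + 2 :=
    ⟨(n - 1) / 2, n - 2 - (n - 1) / 2, by omega, by omega, by omega⟩
  have hshift : List.range' (k + 1) m ++ [k + m + 1] = (k + 1) :: List.range' (k + 2) m := by
    rw [show k + m + 1 = k + 1 + 1 * m by omega, ← List.range'_concat]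
    rfl
  rw [degMultiset_eq_map_range _ (gnGraph_deg hn), map_gnDeg_range hmk hkm, gnDegSeq_eq hmk hkm,
    show [k + m + 1, k + m + 1] = [k + m + 1] ++ [k + m + 1] from rfl, ← List.append_assoc,
    List.append_assoc _ (List.range' _ m), hshift, Multiset.insert_eq_cons, Multiset.add_cons,
    ← Multiset.coe_singleton, Multiset.coe_add, Multiset.cons_coe, Multiset.coe_eq_coe]
  exact (List.perm_middle.append_right _).trans (List.perm_cons _ |>.2 (by simp))

def gnCycle (n p : ℕ) : ℕ := if p = 0 then n - 1 else if p % 2 = 1 then p / 2 else n - 1 - p / 2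

theorem gnGraph_isHamiltonian {n : ℕ} (hn : 3 ≤ n) : (gnGraph n).IsHamiltonian := by
  obtain ⟨m, rfl⟩ : ∃ m, n = m + 3 := ⟨n - 3, by omega⟩
  have hlt {p : ℕ} (hp : p < m + 3) : gnCycle (m + 3) p < m + 3 := by
    unfold gnCycle; split_ifs <;> omega
  let σ (i : Fin (m + 3)) : Fin (m + 3) := ⟨gnCycle (m + 3) i, hlt i.2⟩
  have hσ : Function.Injective σ := fun i j hij => by
    have hi := i.2
    have hj := j.2
    simp only [σ, Fin.ext_iff, gnCycle] at hij ⊢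
    split_ifs at hij <;> omega
  refine isHamiltonian_of_bijective_of_adj_add_one σ (Finite.injective_iff_bijective.1 hσ)
    fun i => ?_
  have hi := i.2
  simp only [σ, gnGraph_adj, ne_eq, Fin.ext_iff, Fin.val_add_one, Fin.val_last, gnCycle]
  split_ifs <;> first | contradiction | omega

/-- for every `n ≥ 3` there is a hamiltonian threshold graph `Gₙ` with degree
sequence `n-1, n-1, n-2, …, ⌈n/2⌉, ⌈n/2⌉, …, 3, 2`. -/
theorem stmt7 (n : ℕ) (hn : 3 ≤ n) :
    ∃ G : SimpleGraph (Fin n), G.IsThreshold ∧ G.degMultiset = gnDegSeq n ∧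
      G.IsHamiltonian :=
  ⟨gnGraph n, isThreshold_thresholdGraph _ _, gnGraph_degMultiset hn, gnGraph_isHamiltonian hn⟩
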